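/- arXiv:1907.00127 — 2 statements merged into one kernel-verified Lean document; each statement's English description precedes it below -/
import Mathlib

section
/- Let d ≥ 1, T ∈ (0,∞], p > 1, κ ≥ 0, let a : ℝ^d → [0,∞) and u₀ : ℝ^d → [0,∞) be measurable, and let K(t,x) = (4πt)^{-d/2} exp(−‖x‖²/(4t)) be the Gaussian heat kernel on ℝ^d. Suppose v : (0,T) × ℝ^d → [0,∞) is measurable, finite everywhere, and satisfies for all t ∈ (0,T) and x ∈ ℝ^d the supersolution inequality v(t,x) ≥ ∫_{ℝ^d} K(t,x−y) u₀(y) dy + κ ∫₀ᵗ ∫_{ℝ^d} K(t−s,x−y) a(y) v(s,y)^p dy ds. Then there exists a measurable u : (0,T) × ℝ^d → [0,∞) with u(t,x) ≤ v(t,x) for all (t,x) which satisfies the corresponding equality u(t,x) = ∫_{ℝ^d} K(t,x−y) u₀(y) dy + κ ∫₀ᵗ ∫_{ℝ^d} K(t−s,x−y) a(y) u(s,y)^p dy ds for all t ∈ (0,T) and x ∈ ℝ^d. -/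
open MeasureTheory ENNReal

/-- The Gaussian heat kernel on `ℝ^d`. -/
noncomputable def heatKernel (d : ℕ) (t : ℝ) (x : EuclideanSpace ℝ (Fin d)) : ℝ :=
  (4 * Real.pi * t) ^ (-(d : ℝ) / 2) * Real.exp (-‖x‖ ^ 2 / (4 * t))

lemma measurable_heatKernel (d : ℕ) :
    Measurable (fun q : ℝ × EuclideanSpace ℝ (Fin d) => heatKernel d q.1 q.2) := by
  unfold heatKernel
  exact ((measurable_const.mul measurable_fst).pow measurable_const).mul
    (((measurable_snd.norm.pow measurable_const).neg.div
      (measurable_const.mul measurable_fst)).exp)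

lemma iSup_rpow_of_pos {p : ℝ} (hp : 0 < p) (f : ℕ → ℝ≥0∞) :
    (⨆ n, f n) ^ p = ⨆ n, f n ^ p := by
  refine le_antisymm ?_ (iSup_le fun n => ENNReal.rpow_le_rpow (le_iSup f n) hp.le)
  have h1 : (⨆ n, f n) ≤ (⨆ n, f n ^ p) ^ (1 / p) := by
    refine iSup_le fun n => ?_
    have : f n = (f n ^ p) ^ (1 / p) := by
      rw [← ENNReal.rpow_mul, mul_one_div, div_self hp.ne', ENNReal.rpow_one]
    rw [this]
    exact ENNReal.rpow_le_rpow (le_iSup (fun n => f n ^ p) n) (by positivity)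
  calc (⨆ n, f n) ^ p ≤ ((⨆ n, f n ^ p) ^ (1 / p)) ^ p := ENNReal.rpow_le_rpow h1 hp.le
    _ = ⨆ n, f n ^ p := by
      rw [← ENNReal.rpow_mul, one_div_mul_cancel hp.ne', ENNReal.rpow_one]

section PhiDef
variable (d : ℕ) (p κ : ℝ) (a u₀ : EuclideanSpace ℝ (Fin d) → ℝ≥0∞)

/-- the Duhamel map -/
noncomputable def phiMap (w : ℝ → EuclideanSpace ℝ (Fin d) → ℝ≥0∞)
    (t : ℝ) (x : EuclideanSpace ℝ (Fin d)) : ℝ≥0∞ :=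
  (∫⁻ y, ENNReal.ofReal (heatKernel d t (x - y)) * u₀ y) +
    ENNReal.ofReal κ * ∫⁻ s in Set.Ioo 0 t,
      ∫⁻ y, ENNReal.ofReal (heatKernel d (t - s) (x - y)) * a y * (w s y) ^ p

variable {d a u₀}

lemma measurable_inner {w : ℝ → EuclideanSpace ℝ (Fin d) → ℝ≥0∞}
    (ha : Measurable a) (hw : Measurable (Function.uncurry w)) :
    Measurable (fun r : (ℝ × EuclideanSpace ℝ (Fin d)) × ℝ =>
      ∫⁻ y, ENNReal.ofReal (heatKernel d (r.1.1 - r.2) (r.1.2 - y)) * a y * (w r.2 y) ^ p) := by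
  apply Measurable.lintegral_prod_right'
    (f := fun q : ((ℝ × EuclideanSpace ℝ (Fin d)) × ℝ) × EuclideanSpace ℝ (Fin d) =>
      ENNReal.ofReal (heatKernel d (q.1.1.1 - q.1.2) (q.1.1.2 - q.2)) * a q.2 * (w q.1.2 q.2) ^ p)
  refine Measurable.mul (Measurable.mul ?_ (ha.comp measurable_snd)) ?_
  · exact ((measurable_heatKernel d).comp
      ((measurable_fst.fst.fst.sub measurable_fst.snd).prodMk
        (measurable_fst.fst.snd.sub measurable_snd))).ennreal_ofReal
  · exact (hw.comp (measurable_fst.snd.prodMk measurable_snd)).pow measurable_const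


lemma measurable_integrand_y {w : ℝ → EuclideanSpace ℝ (Fin d) → ℝ≥0∞}
    (ha : Measurable a) (hw : Measurable (Function.uncurry w)) (t s : ℝ)
    (x : EuclideanSpace ℝ (Fin d)) :
    Measurable (fun y => ENNReal.ofReal (heatKernel d (t - s) (x - y)) * a y * (w s y) ^ p) :=
  ((((measurable_heatKernel d).comp (measurable_const.prodMk
    (measurable_const.sub measurable_id))).ennreal_ofReal).mul ha).mul
    ((hw.comp (measurable_const.prodMk measurable_id)).pow measurable_const)

lemma measurable_inner_slice {w : ℝ → EuclideanSpace ℝ (Fin d) → ℝ≥0∞}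
    (ha : Measurable a) (hw : Measurable (Function.uncurry w)) (t : ℝ)
    (x : EuclideanSpace ℝ (Fin d)) :
    Measurable (fun s =>
      ∫⁻ y, ENNReal.ofReal (heatKernel d (t - s) (x - y)) * a y * (w s y) ^ p) := by
  apply Measurable.lintegral_prod_right' (f := fun q : ℝ × EuclideanSpace ℝ (Fin d) =>
    ENNReal.ofReal (heatKernel d (t - q.1) (x - q.2)) * a q.2 * (w q.1 q.2) ^ p)
  refine Measurable.mul (Measurable.mul ?_ (ha.comp measurable_snd)) ?_
  · exact ((measurable_heatKernel d).comp ((measurable_const.sub measurable_fst).prodMk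
      (measurable_const.sub measurable_snd))).ennreal_ofReal
  · exact (hw.comp (measurable_fst.prodMk measurable_snd)).pow measurable_const

lemma measurable_phiMap {w : ℝ → EuclideanSpace ℝ (Fin d) → ℝ≥0∞}
    (ha : Measurable a) (hu₀ : Measurable u₀) (hw : Measurable (Function.uncurry w)) :
    Measurable (Function.uncurry (phiMap d p κ a u₀ w)) := by
  have hsrc : Measurable (fun q : ℝ × EuclideanSpace ℝ (Fin d) =>
      ∫⁻ y, ENNReal.ofReal (heatKernel d q.1 (q.2 - y)) * u₀ y) := by
    apply Measurable.lintegral_prod_right'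
      (f := fun q : (ℝ × EuclideanSpace ℝ (Fin d)) × EuclideanSpace ℝ (Fin d) =>
        ENNReal.ofReal (heatKernel d q.1.1 (q.1.2 - q.2)) * u₀ q.2)
    exact (((measurable_heatKernel d).comp
      (measurable_fst.fst.prodMk (measurable_fst.snd.sub measurable_snd))).ennreal_ofReal).mul
      (hu₀.comp measurable_snd)
  refine Measurable.add hsrc (Measurable.mul measurable_const ?_)
  have heq : (fun q : ℝ × EuclideanSpace ℝ (Fin d) => ∫⁻ s in Set.Ioo 0 q.1,
      ∫⁻ y, ENNReal.ofReal (heatKernel d (q.1 - s) (q.2 - y)) * a y * (w s y) ^ p) =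
      fun q => ∫⁻ s, ({r : (ℝ × EuclideanSpace ℝ (Fin d)) × ℝ | r.2 ∈ Set.Ioo 0 r.1.1}.indicator
        (fun r => ∫⁻ y, ENNReal.ofReal (heatKernel d (r.1.1 - r.2) (r.1.2 - y)) * a y *
          (w r.2 y) ^ p)) (q, s) := by
    funext q
    rw [← lintegral_indicator measurableSet_Ioo]
    refine lintegral_congr fun s => ?_
    simp only [Set.indicator_apply, Set.mem_setOf_eq]
  rw [heq]
  apply Measurable.lintegral_prod_right'
  apply Measurable.indicator (measurable_inner p ha hw)
  have : {r : (ℝ × EuclideanSpace ℝ (Fin d)) × ℝ | r.2 ∈ Set.Ioo 0 r.1.1} =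
      {r : (ℝ × EuclideanSpace ℝ (Fin d)) × ℝ | 0 < r.2} ∩ {r | r.2 < r.1.1} := by
    ext r; simp [Set.mem_Ioo, and_comm]
  rw [this]
  exact (measurableSet_lt measurable_const measurable_snd).inter
    (measurableSet_lt measurable_snd measurable_fst.fst)

lemma phiMap_mono (hp : 0 < p) {w w' : ℝ → EuclideanSpace ℝ (Fin d) → ℝ≥0∞}
    (h : ∀ s y, w s y ≤ w' s y) (t : ℝ) (x : EuclideanSpace ℝ (Fin d)) :
    phiMap d p κ a u₀ w t x ≤ phiMap d p κ a u₀ w' t x := by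
  refine add_le_add le_rfl (mul_le_mul' le_rfl (lintegral_mono fun s => lintegral_mono fun y =>
    mul_le_mul' le_rfl (ENNReal.rpow_le_rpow (h s y) hp.le)))

end PhiDef

lemma phiMap_mono_on {d : ℕ} {p : ℝ} (κ : ℝ) {a u₀ : EuclideanSpace ℝ (Fin d) → ℝ≥0∞}
    (hp : 0 < p) {T : ℝ≥0∞} {w w' : ℝ → EuclideanSpace ℝ (Fin d) → ℝ≥0∞}
    (h : ∀ s, 0 < s → ENNReal.ofReal s < T → ∀ y, w s y ≤ w' s y)
    {t : ℝ} (hT' : ENNReal.ofReal t < T) (x : EuclideanSpace ℝ (Fin d)) :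
    phiMap d p κ a u₀ w t x ≤ phiMap d p κ a u₀ w' t x := by
  refine add_le_add le_rfl (mul_le_mul' le_rfl ?_)
  refine lintegral_mono_ae ((ae_restrict_iff' measurableSet_Ioo).2 (ae_of_all _ fun s hs => ?_))
  refine lintegral_mono fun y => mul_le_mul' le_rfl (ENNReal.rpow_le_rpow ?_ hp.le)
  exact h s hs.1 (lt_of_le_of_lt (ENNReal.ofReal_le_ofReal hs.2.le) hT') y

set_option maxHeartbeats 1000000 in
theorem mild_solution_below_supersolution (d : ℕ) (hd : 1 ≤ d) (T : ℝ≥0∞) (hT : 0 < T)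
    (p : ℝ) (hp : 1 < p) (κ : ℝ) (hκ : 0 ≤ κ)
    (a : EuclideanSpace ℝ (Fin d) → ℝ≥0∞) (ha : Measurable a) (hafin : ∀ y, a y < ⊤)
    (u₀ : EuclideanSpace ℝ (Fin d) → ℝ≥0∞) (hu₀ : Measurable u₀) (hu₀fin : ∀ y, u₀ y < ⊤)
    (v : ℝ → EuclideanSpace ℝ (Fin d) → ℝ≥0∞)
    (hv : Measurable (Function.uncurry v))
    (hvfin : ∀ t, 0 < t → ENNReal.ofReal t < T → ∀ x, v t x < ⊤)
    (hsuper : ∀ t : ℝ, 0 < t → ENNReal.ofReal t < T → ∀ x,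
      (∫⁻ y, ENNReal.ofReal (heatKernel d t (x - y)) * u₀ y) +
        ENNReal.ofReal κ * ∫⁻ s in Set.Ioo 0 t,
          ∫⁻ y, ENNReal.ofReal (heatKernel d (t - s) (x - y)) * a y * (v s y) ^ p
      ≤ v t x) :
    ∃ u : ℝ → EuclideanSpace ℝ (Fin d) → ℝ≥0∞,
      Measurable (Function.uncurry u) ∧
      (∀ t : ℝ, 0 < t → ENNReal.ofReal t < T → ∀ x, u t x ≤ v t x) ∧
      (∀ t : ℝ, 0 < t → ENNReal.ofReal t < T → ∀ x,
        u t x = (∫⁻ y, ENNReal.ofReal (heatKernel d t (x - y)) * u₀ y) +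
          ENNReal.ofReal κ * ∫⁻ s in Set.Ioo 0 t,
            ∫⁻ y, ENNReal.ofReal (heatKernel d (t - s) (x - y)) * a y * (u s y) ^ p) := by
  classical
  have hp0 : (0 : ℝ) < p := lt_trans zero_lt_one hp
  set Φ : (ℝ → EuclideanSpace ℝ (Fin d) → ℝ≥0∞) → ℝ → EuclideanSpace ℝ (Fin d) → ℝ≥0∞ :=
    phiMap d p κ a u₀ with hΦ
  set seq : ℕ → ℝ → EuclideanSpace ℝ (Fin d) → ℝ≥0∞ := fun n => Φ^[n] (fun _ _ => 0) with hseq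
  have hseq_succ : ∀ n, seq (n + 1) = Φ (seq n) := fun n =>
    Function.iterate_succ_apply' Φ n _
  have hmeas : ∀ n, Measurable (Function.uncurry (seq n)) := by
    intro n
    induction n with
    | zero => exact measurable_const
    | succ n ih =>
      rw [hseq_succ]
      exact measurable_phiMap p κ ha hu₀ ih
  have hmono_step : ∀ n s y, seq n s y ≤ seq (n + 1) s y := by
    intro n
    induction n with
    | zero => exact fun s y => zero_le
    | succ n ih =>
      intro s y
      rw [hseq_succ, hseq_succ]
      exact phiMap_mono p κ hp0 ih s y
  have hmono_le : ∀ s y, Monotone fun n => seq n s y := fun s y =>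
    monotone_nat_of_le_succ fun n => hmono_step n s y
  have hle_v : ∀ n t, 0 < t → ENNReal.ofReal t < T → ∀ x, seq n t x ≤ v t x := by
    intro n
    induction n with
    | zero => exact fun t _ _ x => zero_le
    | succ n ih =>
      intro t ht hT' x
      rw [hseq_succ]
      exact le_trans (phiMap_mono_on κ hp0 ih hT' x) (hsuper t ht hT' x)
  refine ⟨fun t x => ⨆ n, seq n t x, ?_, ?_, ?_⟩
  · exact Measurable.iSup fun n => hmeas n
  · exact fun t ht hT' x => iSup_le fun n => hle_v n t ht hT' x
  · intro t ht hT' x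
    have h1 : (⨆ n, seq n t x) = ⨆ n, Φ (seq n) t x := by
      refine le_antisymm (iSup_le fun n => ?_) (iSup_le fun n => ?_)
      · calc seq n t x ≤ seq (n + 1) t x := hmono_step n t x
          _ = Φ (seq n) t x := by rw [hseq_succ]
          _ ≤ ⨆ m, Φ (seq m) t x := le_iSup (fun m => Φ (seq m) t x) n
      · rw [← hseq_succ n]
        exact le_iSup (fun m => seq m t x) (n + 1)
    have hA : ∀ s y, ENNReal.ofReal (heatKernel d (t - s) (x - y)) * a y *
        (⨆ n, seq n s y) ^ p
        = ⨆ n, ENNReal.ofReal (heatKernel d (t - s) (x - y)) * a y * (seq n s y) ^ p := by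
      intro s y
      rw [iSup_rpow_of_pos hp0, ENNReal.mul_iSup]
    have hB : ∀ s, (∫⁻ y, ENNReal.ofReal (heatKernel d (t - s) (x - y)) * a y *
        (⨆ n, seq n s y) ^ p)
        = ⨆ n, ∫⁻ y, ENNReal.ofReal (heatKernel d (t - s) (x - y)) * a y * (seq n s y) ^ p := by
      intro s
      simp_rw [hA]
      refine lintegral_iSup (fun n => ?_) (fun m n hmn y => ?_)
      · exact measurable_integrand_y p ha (hmeas n) t s x
      · exact mul_le_mul' le_rfl (ENNReal.rpow_le_rpow (hmono_le s y hmn) hp0.le)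
    have hC : (∫⁻ s in Set.Ioo 0 t, ⨆ n,
        ∫⁻ y, ENNReal.ofReal (heatKernel d (t - s) (x - y)) * a y * (seq n s y) ^ p)
        = ⨆ n, ∫⁻ s in Set.Ioo 0 t,
          ∫⁻ y, ENNReal.ofReal (heatKernel d (t - s) (x - y)) * a y * (seq n s y) ^ p := by
      refine lintegral_iSup (fun n => ?_) (fun m n hmn s => ?_)
      · exact measurable_inner_slice p ha (hmeas n) t x
      · exact lintegral_mono fun y =>
          mul_le_mul' le_rfl (ENNReal.rpow_le_rpow (hmono_le s y hmn) hp0.le)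
    have e1 : (∫⁻ s in Set.Ioo 0 t, ∫⁻ y, ENNReal.ofReal (heatKernel d (t - s) (x - y)) * a y *
        (⨆ n, seq n s y) ^ p)
        = ⨆ n, ∫⁻ s in Set.Ioo 0 t,
          ∫⁻ y, ENNReal.ofReal (heatKernel d (t - s) (x - y)) * a y * (seq n s y) ^ p := by
      rw [← hC]
      exact lintegral_congr fun s => hB s
    rw [e1, ENNReal.mul_iSup, ENNReal.add_iSup]
    exact h1
end

section
/- Let d ≥ 1, let p > 1 + 2/d, and let K(t,x) = (4πt)^{-d/2} exp(−‖x‖²/(4t)) be the Gaussian heat kernel on ℝ^d. Then for every k > 0 there exists c₀ > 0 such that for every bounded continuous u₀ : ℝ^d → [0,∞) satisfying u₀(x) ≥ c·exp(−k‖x‖²) for all x for some c ≥ c₀, there is no measurable function u : (0,∞) × ℝ^d → [0,∞), finite everywhere, satisfying for all t > 0 and x ∈ ℝ^d the mild equation u(t,x) = ∫_{ℝ^d} K(t,x−y) u₀(y) dy + ∫₀ᵗ ∫_{ℝ^d} K(t−s,x−y) u(s,y)^p dy ds. -/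
open MeasureTheory ENNReal

lemma gauss_integrable (d : ℕ) {a : ℝ} (ha : 0 < a) :
    Integrable (fun z : EuclideanSpace ℝ (Fin d) => Real.exp (-a * ‖z‖ ^ 2)) := by
  have h0 := (GaussianFourier.integrable_cexp_neg_mul_sq_norm_add
      (V := EuclideanSpace ℝ (Fin d)) (b := (a : ℂ)) (by simpa using ha) 0 0)
  have h1 := h0.re
  refine h1.congr (Filter.Eventually.of_forall fun v => ?_)
  have harg : -(a:ℂ) * (‖v‖:ℂ) ^ 2 + 0 * ((inner ℝ (0 : EuclideanSpace ℝ (Fin d)) v : ℝ) : ℂ)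
      = ((-a * ‖v‖ ^ 2 : ℝ) : ℂ) := by push_cast; ring
  simp only [harg, ← Complex.ofReal_exp]
  exact Complex.ofReal_re _

lemma gauss_lintegral_ge (d : ℕ) {a : ℝ} (ha : 0 < a) :
    ENNReal.ofReal ((Real.pi / a) ^ ((d : ℝ) / 2)) ≤
      ∫⁻ z : EuclideanSpace ℝ (Fin d), ENNReal.ofReal (Real.exp (-a * ‖z‖ ^ 2)) := by
  rw [← ofReal_integral_eq_lintegral_ofReal (gauss_integrable d ha)
    (Filter.Eventually.of_forall fun z => (Real.exp_pos _).le)]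
  have h := GaussianFourier.integral_rexp_neg_mul_sq_norm (V := EuclideanSpace ℝ (Fin d)) ha
  rw [h, finrank_euclideanSpace_fin]

lemma heatKernel_nonneg (d : ℕ) {t : ℝ} (ht : 0 < t) (x : EuclideanSpace ℝ (Fin d)) :
    0 ≤ heatKernel d t x := by
  have := Real.pi_pos
  rw [heatKernel]; positivity


set_option maxHeartbeats 1000000 in
lemma kernel_gauss_lower (d : ℕ) {t c : ℝ} (ht0 : 0 < t) (ht1 : t ≤ 1) (hc : 0 < c)
    (x : EuclideanSpace ℝ (Fin d)) :
    ENNReal.ofReal ((1 + 8 * c) ^ (-(d : ℝ) / 2) * Real.exp (-(2 * c) * ‖x‖ ^ 2)) ≤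
      ∫⁻ y, ENNReal.ofReal (heatKernel d t (x - y)) * ENNReal.ofReal (Real.exp (-c * ‖y‖ ^ 2)) := by
  have hπ := Real.pi_pos
  set a : ℝ := 1 / (4 * t) + 2 * c with ha_def
  have ha : 0 < a := by positivity
  set g : EuclideanSpace ℝ (Fin d) → ℝ :=
    fun z => (4 * Real.pi * t) ^ (-(d : ℝ) / 2) * Real.exp (-a * ‖z‖ ^ 2) with hg_def
  -- pointwise bound
  have step1 : ∀ y : EuclideanSpace ℝ (Fin d),
      ENNReal.ofReal (Real.exp (-(2 * c) * ‖x‖ ^ 2)) * ENNReal.ofReal (g (x - y)) ≤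
      ENNReal.ofReal (heatKernel d t (x - y)) * ENNReal.ofReal (Real.exp (-c * ‖y‖ ^ 2)) := by
    intro y
    rw [← ENNReal.ofReal_mul (by positivity), ← ENNReal.ofReal_mul (heatKernel_nonneg d ht0 _)]
    apply ENNReal.ofReal_le_ofReal
    rw [hg_def, heatKernel]
    have hnorm : ‖y‖ ^ 2 ≤ 2 * ‖x‖ ^ 2 + 2 * ‖x - y‖ ^ 2 := by
      have h1 : ‖y‖ ≤ ‖x‖ + ‖x - y‖ := by
        calc ‖y‖ = ‖x - (x - y)‖ := by congr 1; abel
        _ ≤ ‖x‖ + ‖x - y‖ := norm_sub_le _ _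
      have h2 : ‖y‖ ^ 2 ≤ (‖x‖ + ‖x - y‖) ^ 2 :=
        pow_le_pow_left₀ (norm_nonneg y) h1 2
      nlinarith [sq_nonneg (‖x‖ - ‖x - y‖)]
    have hexp : Real.exp (-(2 * c) * ‖x‖ ^ 2) * Real.exp (-a * ‖x - y‖ ^ 2)
        ≤ Real.exp (-‖x - y‖ ^ 2 / (4 * t)) * Real.exp (-c * ‖y‖ ^ 2) := by
      rw [← Real.exp_add, ← Real.exp_add]
      apply Real.exp_le_exp.mpr
      have hsplit : -a * ‖x - y‖ ^ 2
          = -‖x - y‖ ^ 2 / (4 * t) + -(2 * c) * ‖x - y‖ ^ 2 := by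
        rw [ha_def]; field_simp; ring
      rw [hsplit]
      nlinarith [hc, hnorm]
    have hK : (0:ℝ) ≤ (4 * Real.pi * t) ^ (-(d : ℝ) / 2) := by positivity
    calc Real.exp (-(2 * c) * ‖x‖ ^ 2) *
          ((4 * Real.pi * t) ^ (-(d : ℝ) / 2) * Real.exp (-a * ‖x - y‖ ^ 2))
        = (4 * Real.pi * t) ^ (-(d : ℝ) / 2) *
          (Real.exp (-(2 * c) * ‖x‖ ^ 2) * Real.exp (-a * ‖x - y‖ ^ 2)) := by ring
      _ ≤ (4 * Real.pi * t) ^ (-(d : ℝ) / 2) *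
          (Real.exp (-‖x - y‖ ^ 2 / (4 * t)) * Real.exp (-c * ‖y‖ ^ 2)) := by
          exact mul_le_mul_of_nonneg_left hexp hK
      _ = (4 * Real.pi * t) ^ (-(d : ℝ) / 2) * Real.exp (-‖x - y‖ ^ 2 / (4 * t)) *
          Real.exp (-c * ‖y‖ ^ 2) := by ring
  -- translation invariance
  have h1c : Continuous fun z : EuclideanSpace ℝ (Fin d) => -a * ‖z‖ ^ 2 :=
    continuous_const.mul (continuous_norm.pow 2)
  have hgc : Continuous g := continuous_const.mul (Real.continuous_exp.comp h1c)
  have hgm : Measurable fun z : EuclideanSpace ℝ (Fin d) => ENNReal.ofReal (g z) :=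
    (ENNReal.continuous_ofReal.comp hgc).measurable
  have htrans : ∫⁻ y, ENNReal.ofReal (g (x - y)) = ∫⁻ z, ENNReal.ofReal (g z) :=
    (Measure.measurePreserving_sub_left volume x).lintegral_comp hgm
  -- compute the Gaussian integral lower bound
  have hval : ENNReal.ofReal ((4 * Real.pi * t) ^ (-(d : ℝ) / 2) * (Real.pi / a) ^ ((d : ℝ) / 2))
      ≤ ∫⁻ z, ENNReal.ofReal (g z) := by
    have : ∀ z : EuclideanSpace ℝ (Fin d), ENNReal.ofReal (g z)
        = ENNReal.ofReal ((4 * Real.pi * t) ^ (-(d : ℝ) / 2)) *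
          ENNReal.ofReal (Real.exp (-a * ‖z‖ ^ 2)) := by
      intro z; rw [hg_def, ENNReal.ofReal_mul (by positivity)]
    simp only [this]
    rw [lintegral_const_mul' _ _ ENNReal.ofReal_ne_top,
      ENNReal.ofReal_mul (by positivity)]
    exact mul_le_mul_right (gauss_lintegral_ge d ha) _
  -- the real comparison
  have hreal : (1 + 8 * c) ^ (-(d : ℝ) / 2)
      ≤ (4 * Real.pi * t) ^ (-(d : ℝ) / 2) * (Real.pi / a) ^ ((d : ℝ) / 2) := by
    have h4ta : (4 * Real.pi * t)⁻¹ * (Real.pi / a) = (1 + 8 * t * c)⁻¹ := by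
      rw [ha_def]; field_simp; ring
    have hcomb : (4 * Real.pi * t) ^ (-(d : ℝ) / 2) * (Real.pi / a) ^ ((d : ℝ) / 2)
        = (1 + 8 * t * c) ^ (-(d : ℝ) / 2) := by
      rw [neg_div, Real.rpow_neg (by positivity), ← Real.inv_rpow (by positivity),
        ← Real.mul_rpow (by positivity) (by positivity), h4ta,
        Real.inv_rpow (by positivity), ← Real.rpow_neg (by positivity)]
    rw [hcomb]
    apply Real.rpow_le_rpow_of_nonpos (by nlinarith) (by nlinarith)
    have : (0:ℝ) ≤ (d : ℝ) := Nat.cast_nonneg d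
    rw [neg_div]; linarith [div_nonneg this (by norm_num : (0:ℝ) ≤ 2)]
  -- put it together
  calc ENNReal.ofReal ((1 + 8 * c) ^ (-(d : ℝ) / 2) * Real.exp (-(2 * c) * ‖x‖ ^ 2))
      ≤ ENNReal.ofReal (Real.exp (-(2 * c) * ‖x‖ ^ 2) *
          ((4 * Real.pi * t) ^ (-(d : ℝ) / 2) * (Real.pi / a) ^ ((d : ℝ) / 2))) := by
        apply ENNReal.ofReal_le_ofReal
        rw [mul_comm]
        exact mul_le_mul_of_nonneg_left hreal (Real.exp_pos _).le
    _ = ENNReal.ofReal (Real.exp (-(2 * c) * ‖x‖ ^ 2)) *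
        ENNReal.ofReal ((4 * Real.pi * t) ^ (-(d : ℝ) / 2) * (Real.pi / a) ^ ((d : ℝ) / 2)) :=
        ENNReal.ofReal_mul (Real.exp_pos _).le
    _ ≤ ENNReal.ofReal (Real.exp (-(2 * c) * ‖x‖ ^ 2)) * ∫⁻ z, ENNReal.ofReal (g z) :=
        mul_le_mul_right hval _
    _ = ∫⁻ y, ENNReal.ofReal (Real.exp (-(2 * c) * ‖x‖ ^ 2)) * ENNReal.ofReal (g (x - y)) := by
        rw [lintegral_const_mul' _ _ ENNReal.ofReal_ne_top, htrans]
    _ ≤ _ := lintegral_mono step1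


set_option maxHeartbeats 1000000 in
theorem fujita_supercritical_large_data_blowup (d : ℕ) (hd : 1 ≤ d)
    (p : ℝ) (hp : 1 + 2 / d < p) :
    ∀ k > (0 : ℝ), ∃ c₀ > (0 : ℝ),
      ∀ u₀ : EuclideanSpace ℝ (Fin d) → ℝ, Continuous u₀ → (∀ x, 0 ≤ u₀ x) →
        (∃ M : ℝ, ∀ x, u₀ x ≤ M) →
        (∃ c ≥ c₀, ∀ x, c * Real.exp (-k * ‖x‖ ^ 2) ≤ u₀ x) →
        ¬ ∃ u : ℝ → EuclideanSpace ℝ (Fin d) → ℝ≥0∞,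
          Measurable (Function.uncurry u) ∧
          (∀ t, 0 < t → ∀ x, u t x < ⊤) ∧
          (∀ t : ℝ, 0 < t → ∀ x,
            u t x = (∫⁻ y, ENNReal.ofReal (heatKernel d t (x - y)) * ENNReal.ofReal (u₀ y)) +
              ∫⁻ s in Set.Ioo 0 t,
                ∫⁻ y, ENNReal.ofReal (heatKernel d (t - s) (x - y)) * (u s y) ^ p) := by
  intro k hk
  have hd0 : (0:ℝ) < d := by
    have : (1:ℝ) ≤ d := by exact_mod_cast hd
    linarith
  have hp1 : 1 < p := by
    have h2d : (0:ℝ) < 2 / d := by positivity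
    linarith
  obtain ⟨q, hq_def⟩ : ∃ q : ℝ, q = (1 + p) / 2 := ⟨_, rfl⟩
  have hq1 : 1 < q := by rw [hq_def]; linarith
  have hqp : q < p := by rw [hq_def]; linarith
  have hq10 : (0:ℝ) < q - 1 := by linarith
  have hpq0 : (0:ℝ) < p - q := by linarith
  have hL2 : (0:ℝ) < Real.log 2 := Real.log_pos one_lt_two
  have hL16 : (0:ℝ) ≤ Real.log (1 + 16 * p * k) := Real.log_nonneg (by nlinarith)
  have hL2p : (0:ℝ) < Real.log (2 * p) := Real.log_pos (by linarith)
  obtain ⟨α, hα_def⟩ : ∃ a : ℝ, a = 2 * Real.log 2 + ((d:ℝ)/2) * Real.log (1 + 16 * p * k) :=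
    ⟨_, rfl⟩
  obtain ⟨β, hβ_def⟩ : ∃ b : ℝ, b = Real.log 2 + ((d:ℝ)/2) * Real.log (2 * p) := ⟨_, rfl⟩
  have hα : 0 ≤ α := by
    have : (0:ℝ) ≤ ((d:ℝ)/2) * Real.log (1 + 16 * p * k) :=
      mul_nonneg (by positivity) hL16
    rw [hα_def]; linarith
  have hβ : 0 ≤ β := by
    have : (0:ℝ) ≤ ((d:ℝ)/2) * Real.log (2 * p) :=
      mul_nonneg (by positivity) hL2p.le
    rw [hβ_def]; linarith
  obtain ⟨B, hB_def⟩ : ∃ b : ℝ, b = (α + β / (q - 1)) / (p - q) + 1 := ⟨_, rfl⟩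
  have hBpos : 0 < B := by
    have h1 : (0:ℝ) ≤ (α + β / (q - 1)) / (p - q) :=
      div_nonneg (add_nonneg hα (div_nonneg hβ hq10.le)) hpq0.le
    rw [hB_def]; linarith
  refine ⟨Real.exp B * (1 + 8 * k) ^ ((d:ℝ)/2), by positivity, ?_⟩
  rintro u₀ _hu₀cont hu₀nn _hu₀bd ⟨c, hcge, hlow⟩ ⟨u, _hum, hufin, heq⟩
  have hcpos : (0:ℝ) < c := lt_of_lt_of_le (by positivity) hcge
  obtain ⟨kseq, hkseq⟩ : ∃ f : ℕ → ℝ, f = fun n => 2 * k * (2 * p) ^ n := ⟨_, rfl⟩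
  obtain ⟨tseq, htseq⟩ : ∃ f : ℕ → ℝ, f = fun n => 1/2 - 1/2^(n+1) := ⟨_, rfl⟩
  have h2pow : ∀ n : ℕ, (2:ℝ) ≤ 2 ^ (n+1) := by
    intro n
    calc (2:ℝ) = 2 ^ 1 := (pow_one 2).symm
    _ ≤ 2 ^ (n+1) := pow_le_pow_right₀ (by norm_num) (by omega)
  have htnonneg : ∀ n, 0 ≤ tseq n := by
    intro n
    have h1 : (1:ℝ)/2^(n+1) ≤ 1/2 :=
      one_div_le_one_div_of_le (by norm_num) (h2pow n)
    simp only [htseq]; linarith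
  have htlt : ∀ n, tseq n < 1/2 := by
    intro n
    have h1 : (0:ℝ) < 1/2^(n+1) := by positivity
    simp only [htseq]; linarith
  have hkpos : ∀ n, 0 < kseq n := by
    intro n; simp only [hkseq]; positivity
  -- key induction
  have key : ∀ n : ℕ, ∀ t : ℝ, tseq n < t → t ≤ 1 → ∀ x,
      ENNReal.ofReal (Real.exp (B * q ^ n - kseq n * ‖x‖ ^ 2)) ≤ u t x := by
    intro n
    induction n with
    | zero =>
      intro t ht0' ht1 x
      have htz : tseq 0 = 0 := by simp [htseq]
      have ht0 : 0 < t := by rw [htz] at ht0'; exact ht0'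
      have hX : (0:ℝ) < (1 + 8 * k) ^ ((d:ℝ)/2) := by positivity
      have hcB : Real.exp B ≤ c * (1 + 8 * k) ^ (-(d:ℝ)/2) := by
        rw [neg_div, Real.rpow_neg (by positivity), ← div_eq_mul_inv, le_div_iff₀ hX]
        exact hcge
      calc ENNReal.ofReal (Real.exp (B * q ^ 0 - kseq 0 * ‖x‖ ^ 2))
          ≤ ENNReal.ofReal c *
            ENNReal.ofReal ((1 + 8 * k) ^ (-(d:ℝ)/2) * Real.exp (-(2 * k) * ‖x‖ ^ 2)) := by
            rw [← ENNReal.ofReal_mul hcpos.le]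
            apply ENNReal.ofReal_le_ofReal
            have harg : B * q ^ 0 - kseq 0 * ‖x‖ ^ 2 = B + -(2 * k) * ‖x‖ ^ 2 := by
              simp only [hkseq, pow_zero, mul_one]; ring
            rw [harg, Real.exp_add, ← mul_assoc]
            exact mul_le_mul_of_nonneg_right hcB (Real.exp_pos _).le
        _ ≤ ENNReal.ofReal c * ∫⁻ y, ENNReal.ofReal (heatKernel d t (x - y)) *
              ENNReal.ofReal (Real.exp (-k * ‖y‖ ^ 2)) :=
            mul_le_mul_right (kernel_gauss_lower d ht0 ht1 hk x) _
        _ = ∫⁻ y, ENNReal.ofReal (heatKernel d t (x - y)) *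
              (ENNReal.ofReal c * ENNReal.ofReal (Real.exp (-k * ‖y‖ ^ 2))) := by
            rw [← lintegral_const_mul' _ _ ENNReal.ofReal_ne_top]
            exact lintegral_congr fun y => mul_left_comm _ _ _
        _ ≤ ∫⁻ y, ENNReal.ofReal (heatKernel d t (x - y)) * ENNReal.ofReal (u₀ y) := by
            refine lintegral_mono fun y => mul_le_mul_right ?_ _
            rw [← ENNReal.ofReal_mul hcpos.le]
            exact ENNReal.ofReal_le_ofReal (hlow y)
        _ ≤ u t x := by rw [heq t ht0 x]; exact le_self_add
    | succ n ih =>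
      intro t htn1 ht1 x
      have h0t : 0 < t := lt_of_le_of_lt (htnonneg _) htn1
      have hsub : Set.Ioo (tseq n) (tseq (n+1)) ⊆ Set.Ioo 0 t := by
        intro s hs
        exact ⟨lt_of_le_of_lt (htnonneg n) hs.1, lt_trans hs.2 htn1⟩
      have hpk : 0 < p * kseq n := mul_pos (by linarith) (hkpos n)
      have hinner : ∀ s ∈ Set.Ioo (tseq n) (tseq (n+1)),
          ENNReal.ofReal (Real.exp (p * (B * q ^ n))) *
            ENNReal.ofReal ((1 + 8 * (p * kseq n)) ^ (-(d:ℝ)/2) *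
              Real.exp (-(2 * (p * kseq n)) * ‖x‖ ^ 2))
          ≤ ∫⁻ y, ENNReal.ofReal (heatKernel d (t - s) (x - y)) * (u s y) ^ p := by
        intro s hs
        have hs1 : s ≤ 1 := by
          have := htlt (n+1); have := hs.2; linarith
        have hts0 : 0 < t - s := by have := hs.2; linarith
        have hts1 : t - s ≤ 1 := by
          have := htnonneg n; have := hs.1; linarith
        calc ENNReal.ofReal (Real.exp (p * (B * q ^ n))) *
            ENNReal.ofReal ((1 + 8 * (p * kseq n)) ^ (-(d:ℝ)/2) *
              Real.exp (-(2 * (p * kseq n)) * ‖x‖ ^ 2))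
            ≤ ENNReal.ofReal (Real.exp (p * (B * q ^ n))) *
              ∫⁻ y, ENNReal.ofReal (heatKernel d (t - s) (x - y)) *
                ENNReal.ofReal (Real.exp (-(p * kseq n) * ‖y‖ ^ 2)) :=
              mul_le_mul_right (kernel_gauss_lower d hts0 hts1 hpk x) _
          _ = ∫⁻ y, ENNReal.ofReal (heatKernel d (t - s) (x - y)) *
              (ENNReal.ofReal (Real.exp (p * (B * q ^ n))) *
                ENNReal.ofReal (Real.exp (-(p * kseq n) * ‖y‖ ^ 2))) := by
              rw [← lintegral_const_mul' _ _ ENNReal.ofReal_ne_top]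
              exact lintegral_congr fun y => mul_left_comm _ _ _
          _ ≤ ∫⁻ y, ENNReal.ofReal (heatKernel d (t - s) (x - y)) * (u s y) ^ p := by
              refine lintegral_mono fun y => mul_le_mul_right ?_ _
              have hihy := ih s hs.1 hs1 y
              have h1 : ENNReal.ofReal (Real.exp (B * q ^ n - kseq n * ‖y‖ ^ 2)) ^ p
                  ≤ (u s y) ^ p := ENNReal.rpow_le_rpow hihy (by linarith)
              rw [ENNReal.ofReal_rpow_of_pos (Real.exp_pos _), ← Real.exp_mul] at h1
              refine le_trans (le_of_eq ?_) h1
              rw [← ENNReal.ofReal_mul (Real.exp_pos _).le, ← Real.exp_add]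
              congr 1
              ring
      have hvol : volume (Set.Ioo (tseq n) (tseq (n+1))) = ENNReal.ofReal (1/2^(n+2)) := by
        rw [Real.volume_Ioo]
        congr 1
        have h2 : (2:ℝ)^(n+2) = 2^(n+1) * 2 := pow_succ _ _
        have h2n : (2:ℝ)^(n+1) ≠ 0 := by positivity
        simp only [htseq]
        rw [h2]
        field_simp
        ring
      have hlow2 : (ENNReal.ofReal (Real.exp (p * (B * q ^ n))) *
            ENNReal.ofReal ((1 + 8 * (p * kseq n)) ^ (-(d:ℝ)/2) *
              Real.exp (-(2 * (p * kseq n)) * ‖x‖ ^ 2))) *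
          ENNReal.ofReal (1/2^(n+2)) ≤ u t x := by
        rw [heq t h0t x]
        refine le_trans ?_ le_add_self
        calc _ = ∫⁻ _ in Set.Ioo (tseq n) (tseq (n+1)),
              ENNReal.ofReal (Real.exp (p * (B * q ^ n))) *
                ENNReal.ofReal ((1 + 8 * (p * kseq n)) ^ (-(d:ℝ)/2) *
                  Real.exp (-(2 * (p * kseq n)) * ‖x‖ ^ 2)) := by
              rw [setLIntegral_const, hvol]
          _ ≤ ∫⁻ s in Set.Ioo (tseq n) (tseq (n+1)),
                ∫⁻ y, ENNReal.ofReal (heatKernel d (t - s) (x - y)) * (u s y) ^ p :=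
              setLIntegral_mono' measurableSet_Ioo hinner
          _ ≤ ∫⁻ s in Set.Ioo 0 t,
                ∫⁻ y, ENNReal.ofReal (heatKernel d (t - s) (x - y)) * (u s y) ^ p :=
              lintegral_mono_set hsub
      refine le_trans ?_ hlow2
      rw [← ENNReal.ofReal_mul (Real.exp_pos _).le, ← ENNReal.ofReal_mul (by positivity)]
      apply ENNReal.ofReal_le_ofReal
      -- real arithmetic
      obtain ⟨X, hX_def⟩ : ∃ x : ℝ, x = 1 + 8 * (p * kseq n) := ⟨_, rfl⟩
      have hXpos : (0:ℝ) < X := by rw [hX_def]; nlinarith [hpk]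
      obtain ⟨Y, hY_def⟩ : ∃ y : ℝ, y = X ^ ((d:ℝ)/2) := ⟨_, rfl⟩
      have hYpos : 0 < Y := by rw [hY_def]; exact Real.rpow_pos_of_pos hXpos _
      obtain ⟨P, hP_def⟩ : ∃ r : ℝ, r = (2:ℝ)^(n+2) := ⟨_, rfl⟩
      have hPpos : 0 < P := by rw [hP_def]; positivity
      have h2pn : (1:ℝ) ≤ (2 * p) ^ n := one_le_pow₀ (by linarith)
      have hn0 : (0:ℝ) ≤ n := Nat.cast_nonneg n
      have hlog1 : Real.log X
          ≤ Real.log (1 + 16 * p * k) + (n:ℝ) * Real.log (2 * p) := by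
        have harg : X = 1 + 16 * p * k * (2 * p) ^ n := by
          rw [hX_def]; simp only [hkseq]; ring
        have hle : 1 + 16 * p * k * (2 * p) ^ n ≤ (1 + 16 * p * k) * (2 * p) ^ n := by
          nlinarith
        calc Real.log X ≤ Real.log ((1 + 16 * p * k) * (2 * p) ^ n) := by
              rw [harg]; exact Real.log_le_log (by positivity) hle
          _ = Real.log (1 + 16 * p * k) + (n:ℝ) * Real.log (2 * p) := by
              rw [Real.log_mul (by positivity) (by positivity), Real.log_pow]
      have hqn : 1 + (n:ℝ) * (q - 1) ≤ q ^ n := by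
        have h := one_add_mul_le_pow (a := q - 1) (by linarith) n
        rw [show (1:ℝ) + (q - 1) = q by ring] at h
        exact h
      have hstep : α + β * (n:ℝ) ≤ B * (p - q) * q ^ n := by
        have hBval : B * (p - q) = α + β / (q - 1) + (p - q) := by
          rw [hB_def, add_mul, one_mul, div_mul_cancel₀ _ (ne_of_gt hpq0)]
        have hD0 : 0 ≤ β / (q - 1) := div_nonneg hβ hq10.le
        have hDn : (n:ℝ) * (β / (q - 1) * (q - 1)) = (n:ℝ) * β := by
          rw [div_mul_cancel₀ _ (ne_of_gt hq10)]
        have h2 : α + β * (n:ℝ) ≤ (α + β / (q - 1) + (p - q)) * (1 + (n:ℝ) * (q - 1)) := by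
          nlinarith [mul_nonneg (mul_nonneg hn0 hq10.le) hα,
            mul_nonneg (mul_nonneg hn0 hq10.le) hpq0.le, hD0, hpq0.le, hDn]
        calc α + β * (n:ℝ) ≤ (α + β / (q - 1) + (p - q)) * (1 + (n:ℝ) * (q - 1)) := h2
          _ ≤ (α + β / (q - 1) + (p - q)) * q ^ n :=
              mul_le_mul_of_nonneg_left hqn (by linarith)
          _ = B * (p - q) * q ^ n := by rw [hBval]
      have har : B * q ^ (n+1) + ((n:ℝ) + 2) * Real.log 2 +
          ((d:ℝ)/2) * Real.log X ≤ p * (B * q ^ n) := by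
        have hd2 : (0:ℝ) ≤ (d:ℝ)/2 := by positivity
        have h1 := mul_le_mul_of_nonneg_left hlog1 hd2
        have hαβ : ((n:ℝ) + 2) * Real.log 2 +
            ((d:ℝ)/2) * (Real.log (1 + 16 * p * k) + (n:ℝ) * Real.log (2 * p))
            = α + β * (n:ℝ) := by rw [hα_def, hβ_def]; ring
        have hexp2 : B * (p - q) * q ^ n = p * (B * q ^ n) - B * (q ^ n * q) := by ring
        rw [pow_succ]
        linarith
      -- exponential conversion
      have e1 : Real.exp (((n:ℝ) + 2) * Real.log 2) = P := by
        rw [mul_comm, Real.exp_mul, Real.exp_log two_pos, hP_def,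
          show ((n:ℝ) + 2) = ((n + 2 : ℕ) : ℝ) by push_cast; ring, Real.rpow_natCast]
      have e2 : Real.exp (((d:ℝ)/2) * Real.log X) = Y := by
        rw [mul_comm, Real.exp_mul, Real.exp_log hXpos, hY_def]
      have hmain : Real.exp (B * q ^ (n+1)) * P * Y ≤ Real.exp (p * (B * q ^ n)) := by
        have h := Real.exp_le_exp.mpr har
        rw [Real.exp_add, Real.exp_add, e1, e2] at h
        exact h
      have hkk : 2 * (p * kseq n) = kseq (n+1) := by
        simp only [hkseq]; ring
      have hXinv : X ^ (-(d:ℝ)/2) = Y⁻¹ := by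
        rw [neg_div, Real.rpow_neg hXpos.le, hY_def]
      have h3 : Real.exp (B * q ^ (n+1)) ≤ Real.exp (p * (B * q ^ n)) / (Y * P) := by
        rw [le_div_iff₀ (by positivity)]
        calc Real.exp (B * q ^ (n+1)) * (Y * P)
            = Real.exp (B * q ^ (n+1)) * P * Y := by ring
          _ ≤ _ := hmain
      rw [← hX_def, hXinv, hkk]
      have hrhs : Real.exp (p * (B * q ^ n)) *
          (Y⁻¹ * Real.exp (-(kseq (n+1)) * ‖x‖ ^ 2)) * (1/2^(n+2))
          = (Real.exp (p * (B * q ^ n)) / (Y * P)) *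
            Real.exp (-(kseq (n+1)) * ‖x‖ ^ 2) := by
        rw [hP_def]
        field_simp
      rw [hrhs]
      have harg2 : B * q ^ (n+1) - kseq (n+1) * ‖x‖ ^ 2
          = B * q ^ (n+1) + (-(kseq (n+1)) * ‖x‖ ^ 2) := by ring
      rw [harg2, Real.exp_add]
      exact mul_le_mul_of_nonneg_right h3 (Real.exp_pos _).le
  -- final contradiction
  have hfin := hufin 1 one_pos (0 : EuclideanSpace ℝ (Fin d))
  have hub : ∀ n : ℕ, Real.exp (B * q ^ n) ≤ (u 1 0).toReal := by
    intro n
    have h1 := key n 1 (lt_of_lt_of_le (htlt n) (by norm_num)) le_rfl 0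
    have h2 : ENNReal.ofReal (Real.exp (B * q ^ n)) ≤ u 1 0 := by
      simpa using h1
    exact (ENNReal.ofReal_le_iff_le_toReal hfin.ne).mp h2
  obtain ⟨n, hn⟩ := exists_nat_gt ((u 1 0).toReal / (B * (q - 1)))
  have hq' : (0:ℝ) < B * (q - 1) := mul_pos hBpos (by linarith)
  have hqn : 1 + (n:ℝ) * (q - 1) ≤ q ^ n := by
    have h := one_add_mul_le_pow (a := q - 1) (by linarith) n
    rw [show (1:ℝ) + (q - 1) = q by ring] at h
    exact h
  have hgt : (u 1 0).toReal < Real.exp (B * q ^ n) := by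
    have h1 : (u 1 0).toReal < (n:ℝ) * (B * (q - 1)) := by
      rw [div_lt_iff₀ hq'] at hn; linarith
    have h2 := mul_le_mul_of_nonneg_left hqn hBpos.le
    have h3 := Real.add_one_le_exp (B * q ^ n)
    nlinarith
  linarith [hub n]
end
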